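/- Let τ ∈ iℝ_{>0} and α ∈ ℝ with e^{3iα} ≠ 1, and set s = e^{iα}. Define X(z) = e^{−4πτi/3} θ(z,3τ) θ(z−πτ,3τ)/(θ(z+πτ,3τ) θ(z−2πτ,3τ)) and L(z) = (1/(1−e^{3iα}))·( e^{3iα} + e^{2iα}/X(z) + e^{iα} X(z−πτ) ) + ( e^{iα+5iπτ/3} θ(πτ,3τ) θ'(0,τ) / ((1−e^{3iα}) θ(α/2 − 2πτ/3, τ) θ'(0,3τ)) ) · θ(z−2πτ,3τ) θ(z − α/2 + 2πτ/3, τ) / (θ(z,τ) θ(z,3τ)). Then for every z ∈ ℂ at which all quantities are defined and X(z) ≠ 0, one has 1 = −L(z) + L(z+πτ)/(s·X(z)). -/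

import Mathlib

/-! The theta function is quasi-periodic: `θ(z + πτ, τ) = -exp(-iπτ - 2iz) θ(z, τ)`.
With modulus `3τ` this gives the cocycle relation `X(z - πτ) X(z) X(z + πτ) = 1`, and with both
moduli `τ` and `3τ` it shows that the theta quotient `Q` appearing in `L` satisfies
`Q(z + πτ) = s X(z) Q(z)`. Writing `L = (s³ + s²/X(z) + s X(z - πτ))/(1 - s³) + k Q(z)`, the
equation becomes a rational identity in `s` and the three values of `X`, whatever the
constant `k`. -/

open scoped BigOperators
noncomputable section

abbrev WSt : Type := ℤ × ℕ × ℕ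

def cellStep (v w : WSt) : Prop :=
  w = (v.1, v.2.1 + 1, v.2.2 + 1) ∨
  (1 ≤ v.2.2 ∧ w = (v.1, v.2.1, v.2.2 - 1)) ∨
  (1 ≤ v.2.1 ∧ w = (v.1, v.2.1 - 1, v.2.2)) ∨
  (v.2.1 = 0 ∧ w = (v.1 + 1, v.2.2, 0)) ∨
  (v.2.2 = 0 ∧ w = (v.1 - 1, 0, v.2.1 + 1))

def vertStep (v w : WSt) : Prop :=
  w = (v.1, v.2.1 + 1, v.2.2 + 1) ∨
  (1 ≤ v.2.2 ∧ w = (v.1, v.2.1, v.2.2 - 1)) ∨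
  (1 ≤ v.2.1 ∧ w = (v.1, v.2.1 - 1, v.2.2)) ∨
  (v.2.1 = 0 ∧ 1 ≤ v.2.2 ∧ w = (v.1 + 1, v.2.2 - 1, 0)) ∨
  (v.2.2 = 0 ∧ w = (v.1 - 1, 0, v.2.1 + 2))

def pathCount (step : WSt → WSt → Prop) (n : ℕ) (v : WSt) : ℕ :=
  Nat.card {p : Fin (n + 1) → WSt //
    p 0 = ((0 : ℤ), 0, 0) ∧ p (Fin.last n) = v ∧
    ∀ i : Fin n, step (p i.castSucc) (p i.succ)}

/-- number of cell-centred excursions of length `n` with winding angle `2πk/3` -/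
def eCell (n : ℕ) (k : ℤ) : ℕ := pathCount cellStep n (k, 0, 0)

/-- number of vertex-centred walks of length `n` with winding angle `2πk/3` -/
def eVert (n : ℕ) (k : ℤ) : ℕ := pathCount vertStep n (k, 0, 0)

/-- The series `T_k(u,q)`. -/
def Tk (k : ℕ) (u q : ℂ) : ℂ :=
  ∑' n : ℕ, (-1 : ℂ) ^ n * ((2 * n + 1 : ℕ) : ℂ) ^ k * q ^ (n * (n + 1) / 2) *
    (u ^ (n + 1) - (-1 : ℂ) ^ k * u ^ (-(n : ℤ)))

/-- Jacobi theta function θ₁₁. -/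
def jTheta (z τ : ℂ) : ℂ :=
  ∑' n : ℤ, (-1 : ℂ) ^ n *
    Complex.exp (((2 * (n : ℂ) + 1) / 2) ^ 2 * Complex.I * (Real.pi : ℂ) * τ +
      (2 * (n : ℂ) + 1) * Complex.I * z)

/-- derivative of θ with respect to z -/
def jTheta' (z τ : ℂ) : ℂ := deriv (fun w => jTheta w τ) z

/-- parameterising function X(z) for the Kreweras kernel -/
def Xfun (τ z : ℂ) : ℂ :=
  Complex.exp (-(4 * (Real.pi : ℂ) * τ * Complex.I) / 3) *
    (jTheta z (3 * τ) * jTheta (z - Real.pi * τ) (3 * τ)) /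
    (jTheta (z + Real.pi * τ) (3 * τ) * jTheta (z - 2 * Real.pi * τ) (3 * τ))

/-- The function `L(z)` from the solution of the functional equation. -/
def Lfun (τ : ℂ) (α : ℝ) (z : ℂ) : ℂ :=
  (1 / (1 - Complex.exp (3 * Complex.I * α))) *
    (Complex.exp (3 * Complex.I * α) + Complex.exp (2 * Complex.I * α) / Xfun τ z +
      Complex.exp (Complex.I * α) * Xfun τ (z - Real.pi * τ)) +
  (Complex.exp (Complex.I * α + 5 * Complex.I * Real.pi * τ / 3) *
      jTheta (Real.pi * τ) (3 * τ) * jTheta' 0 τ /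
    ((1 - Complex.exp (3 * Complex.I * α)) *
      jTheta ((α : ℂ) / 2 - 2 * Real.pi * τ / 3) τ * jTheta' 0 (3 * τ))) *
  (jTheta (z - 2 * Real.pi * τ) (3 * τ) * jTheta (z - (α : ℂ) / 2 + 2 * Real.pi * τ / 3) τ /
    (jTheta z τ * jTheta z (3 * τ)))

section

open Complex
open scoped Real

lemma jTheta_add_pi_mul (z τ : ℂ) :
    jTheta (z + π * τ) τ = -exp (-(I * π * τ) - 2 * I * z) * jTheta z τ := by
  unfold jTheta
  rw [← tsum_mul_left]
  conv_rhs => rw [← (Equiv.addRight (1 : ℤ)).tsum_eq]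
  refine tsum_congr fun n => ?_
  have hexp : exp (-(I * π * τ) - 2 * I * z) *
        exp (((2 * ((n : ℂ) + 1) + 1) / 2) ^ 2 * I * π * τ + (2 * ((n : ℂ) + 1) + 1) * I * z) =
      exp (((2 * (n : ℂ) + 1) / 2) ^ 2 * I * π * τ + (2 * (n : ℂ) + 1) * I * (z + π * τ)) := by
    rw [← exp_add]; ring_nf
  simp only [Equiv.coe_addRight, Int.cast_add, Int.cast_one,
    zpow_add_one₀ (by norm_num : (-1 : ℂ) ≠ 0)]
  linear_combination (-(-1 : ℂ) ^ n) * hexp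

-- Division by zero is `0`, so `Xfun τ z ≠ 0` also rules out a vanishing denominator.
lemma jTheta_ne_zero_of_Xfun_ne_zero {τ z : ℂ} (h : Xfun τ z ≠ 0) :
    jTheta z (3 * τ) ≠ 0 ∧ jTheta (z - π * τ) (3 * τ) ≠ 0 ∧
      jTheta (z + π * τ) (3 * τ) ≠ 0 ∧ jTheta (z - 2 * π * τ) (3 * τ) ≠ 0 := by
  simp only [Xfun, ne_eq, div_eq_zero_iff, mul_eq_zero, not_or] at h
  tauto

lemma Xfun_sub_mul_Xfun_mul_Xfun_add {τ z : ℂ} (h : Xfun τ z ≠ 0) :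
    Xfun τ (z - π * τ) * Xfun τ z * Xfun τ (z + π * τ) = 1 := by
  obtain ⟨hA, hB, hC, hD⟩ := jTheta_ne_zero_of_Xfun_ne_zero h
  have hXsub : Xfun τ (z - π * τ) = exp (-(4 * π * τ * I) / 3) *
      (jTheta (z - π * τ) (3 * τ) * jTheta (z - 2 * π * τ) (3 * τ)) /
      (jTheta z (3 * τ) * jTheta (z - 3 * π * τ) (3 * τ)) := by
    unfold Xfun; ring_nf
  have hXadd : Xfun τ (z + π * τ) = exp (-(4 * π * τ * I) / 3) *
      (jTheta (z + π * τ) (3 * τ) * jTheta z (3 * τ)) /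
      (jTheta (z + 2 * π * τ) (3 * τ) * jTheta (z - π * τ) (3 * τ)) := by
    unfold Xfun; ring_nf
  have hA' := jTheta_add_pi_mul (z - 3 * π * τ) (3 * τ)
  have hF' := jTheta_add_pi_mul (z - π * τ) (3 * τ)
  rw [show z - 3 * π * τ + π * (3 * τ) = z by ring] at hA'
  rw [show z - π * τ + π * (3 * τ) = z + 2 * π * τ by ring] at hF'
  have hE : jTheta (z - 3 * π * τ) (3 * τ) ≠ 0 := fun h0 => hA (by rw [hA', h0, mul_zero])
  have hexp : exp (-(4 * π * τ * I) / 3) ^ 3 * exp (-(I * π * (3 * τ)) - 2 * I * (z - 3 * π * τ)) =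
      exp (-(I * π * (3 * τ)) - 2 * I * (z - π * τ)) := by
    rw [← exp_nat_mul, ← exp_add]; ring_nf
  rw [hXsub, hXadd, Xfun, hF', hA', ← hexp]
  generalize jTheta (z - π * τ) (3 * τ) = B at hB ⊢
  generalize jTheta (z + π * τ) (3 * τ) = C at hC ⊢
  generalize jTheta (z - 2 * π * τ) (3 * τ) = D at hD ⊢
  generalize jTheta (z - 3 * π * τ) (3 * τ) = E at hE ⊢
  field_simp [exp_ne_zero]

def thetaQuot (τ α z : ℂ) : ℂ :=
  jTheta (z - 2 * π * τ) (3 * τ) * jTheta (z - α / 2 + 2 * π * τ / 3) τ /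
    (jTheta z τ * jTheta z (3 * τ))

lemma thetaQuot_add_pi_mul {τ z : ℂ} (α : ℂ) (h : Xfun τ z ≠ 0) :
    thetaQuot τ α (z + π * τ) = exp (I * α) * Xfun τ z * thetaQuot τ α z := by
  obtain ⟨hA, -, -, hD⟩ := jTheta_ne_zero_of_Xfun_ne_zero h
  have hexp : exp (-(4 * π * τ * I) / 3) * exp (I * α) * exp (-(I * π * τ) - 2 * I * z) =
      exp (-(I * π * τ) - 2 * I * (z - α / 2 + 2 * π * τ / 3)) := by
    rw [← exp_add, ← exp_add]; ring_nf
  unfold thetaQuot Xfun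
  rw [show z + π * τ - 2 * π * τ = z - π * τ by ring,
    show z + π * τ - α / 2 + 2 * π * τ / 3 = z - α / 2 + 2 * π * τ / 3 + π * τ by ring,
    jTheta_add_pi_mul z, jTheta_add_pi_mul (z - α / 2 + 2 * π * τ / 3), ← hexp]
  generalize jTheta z (3 * τ) = A at hA ⊢
  generalize jTheta (z - 2 * π * τ) (3 * τ) = D at hD ⊢
  field_simp [exp_ne_zero]

lemma one_eq_neg_add_div_of_mul_eq_one {K : Type*} [Field K] {w xm x xp k S Sp : K}
    (hw : w ≠ 0) (hw3 : w ^ 3 ≠ 1) (hx : xm * x * xp = 1) (hS : Sp = w * x * S) :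
    1 = -(1 / (1 - w ^ 3) * (w ^ 3 + w ^ 2 / x + w * xm) + k * S) +
      (1 / (1 - w ^ 3) * (w ^ 3 + w ^ 2 / xp + w * x) + k * Sp) / (w * x) := by
  have hx0 : x ≠ 0 := by rintro rfl; simp at hx
  have hxp : xp = 1 / (xm * x) := by
    rw [eq_div_iff (left_ne_zero_of_mul_eq_one hx)]
    linear_combination hx
  have hw3' : 1 - w ^ 3 ≠ 0 := sub_ne_zero.mpr hw3.symm
  subst hS hxp
  field_simp
  ring

lemma exp_nat_mul_I_mul (n : ℕ) (x : ℂ) : exp (n * I * x) = exp (I * x) ^ n := by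
  rw [← exp_nat_mul, mul_assoc]

lemma exists_Lfun_eq_add_mul_thetaQuot (τ : ℂ) (α : ℝ) : ∃ k : ℂ, ∀ z,
    Lfun τ α z = 1 / (1 - exp (I * α) ^ 3) *
      (exp (I * α) ^ 3 + exp (I * α) ^ 2 / Xfun τ z + exp (I * α) * Xfun τ (z - π * τ)) +
      k * thetaQuot τ α z := by
  refine ⟨?k, fun z => ?eq⟩
  case eq =>
    unfold Lfun thetaQuot
    rw [← exp_nat_mul_I_mul, ← exp_nat_mul_I_mul]
    push_cast
    rfl

end

theorem L_equation_general
    (τ : ℂ)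
    (α : ℝ) (hα : Complex.exp (3 * Complex.I * α) ≠ 1)
    (s : ℂ) (hs : s = Complex.exp (Complex.I * α))
    (z : ℂ)
    (hXz : Xfun τ z ≠ 0) :
    1 = -Lfun τ α z + Lfun τ α (z + Real.pi * τ) / (s * Xfun τ z) := by
  obtain ⟨k, hL⟩ := exists_Lfun_eq_add_mul_thetaQuot τ α
  have hw3 : Complex.exp (Complex.I * α) ^ 3 ≠ 1 := by
    rwa [← exp_nat_mul_I_mul, Nat.cast_ofNat]
  rw [hs, hL, hL, add_sub_cancel_right]
  exact one_eq_neg_add_div_of_mul_eq_one (Complex.exp_ne_zero _) hw3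
    (Xfun_sub_mul_Xfun_mul_Xfun_add hXz) (thetaQuot_add_pi_mul α hXz)

/-- equation (4): the equation satisfied by `L(z)`. -/
theorem L_equation
    (y : ℝ) (hy : 0 < y) (τ : ℂ) (hτ : τ = Complex.I * y)
    (α : ℝ) (hα : Complex.exp (3 * Complex.I * α) ≠ 1)
    (s : ℂ) (hs : s = Complex.exp (Complex.I * α))
    (z : ℂ)
    (hdX1 : jTheta (z + Real.pi * τ) (3 * τ) * jTheta (z - 2 * Real.pi * τ) (3 * τ) ≠ 0)
    (hdX2 : jTheta z (3 * τ) * jTheta (z - 3 * Real.pi * τ) (3 * τ) ≠ 0)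
    (hdX3 : jTheta (z + 2 * Real.pi * τ) (3 * τ) * jTheta (z - Real.pi * τ) (3 * τ) ≠ 0)
    (hdL1 : jTheta z τ * jTheta z (3 * τ) ≠ 0)
    (hdL2 : jTheta (z + Real.pi * τ) τ * jTheta (z + Real.pi * τ) (3 * τ) ≠ 0)
    (hdα : jTheta ((α : ℂ) / 2 - 2 * Real.pi * τ / 3) τ ≠ 0)
    (hdθ : jTheta' 0 (3 * τ) ≠ 0)
    (hXz : Xfun τ z ≠ 0) (hXzp : Xfun τ (z + Real.pi * τ) ≠ 0) :
    1 = -Lfun τ α z + Lfun τ α (z + Real.pi * τ) / (s * Xfun τ z) :=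
  L_equation_general τ α hα s hs z hXz
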